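/- arXiv:1204.6152 — 2 statements merged into one kernel-verified Lean document; each statement's English description precedes it below -/
import Mathlib

section
/- Let T be a tree with vertices x, y and f_T(x) > f_T(y), and let X be a rooted tree with at least 2 vertices. Let T' be obtained by identifying the root of X with y, and T'' by identifying the root of X with x. Then F(T'') > F(T'). -/
open SimpleGraph

/-- The number of subtrees of a graph `G`. -/
noncomputable def numSubtrees {V : Type*} [Fintype V] (G : SimpleGraph V) : ℕ :=
  {S : Set V | S.Nonempty ∧ (G.induce S).Connected}.ncard

/-- The number of subtrees of `G` containing the vertex `v`. -/
noncomputable def numSubtreesContaining {V : Type*} [Fintype V] (G : SimpleGraph V) (v : V) : ℕ :=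
  {S : Set V | v ∈ S ∧ (G.induce S).Connected}.ncard

/-- The graph obtained from `T` and the rooted tree `(X, a0)` by identifying the root `a0`
of `X` with the vertex `x` of `T`. -/
def glue {V A : Type*} (T : SimpleGraph V) (x : V) (X : SimpleGraph A) (a0 : A) :
    SimpleGraph (V ⊕ {a : A // a ≠ a0}) :=
  SimpleGraph.fromRel (fun p q =>
    match p, q with
    | Sum.inl v, Sum.inl w => T.Adj v w
    | Sum.inr a, Sum.inr b => X.Adj a.1 b.1
    | Sum.inl v, Sum.inr a => v = x ∧ X.Adj a0 a.1
    | Sum.inr _, Sum.inl _ => False)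

/-!
A subtree of `glue T x X a0` either lies inside one of the two parts, and these subtrees do not
depend on the gluing vertex `x`, or it meets both parts. In the second case it contains `x` (a cut
vertex) and splits uniquely into a subtree of `T` containing `x` and a subtree of `X` containing
the root and some other vertex. Hence
`F(glue T x X a0) = F(T ⊕ (X - a0)) + f_T(x) · #{rooted subtrees of X other than {a0}}`,
and the last factor is positive as soon as the root has a neighbour.
-/

namespace SimpleGraph

variable {V W : Type*} {G : SimpleGraph V} {H : SimpleGraph W}

theorem Reachable.map_of_adj {f : V → W} (hf : ∀ u v, G.Adj u v → f u = f v ∨ H.Adj (f u) (f v))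
    {u v : V} (h : G.Reachable u v) : H.Reachable (f u) (f v) := by
  rw [reachable_iff_reflTransGen] at h ⊢
  refine h.lift' f fun a b hab => ?_
  change Relation.ReflTransGen H.Adj (f a) (f b)
  rcases hf a b hab with heq | hadj
  · rw [heq]
  · exact .single hadj

theorem Connected.induce_image {f : V → W}
    (hf : ∀ u v, G.Adj u v → f u = f v ∨ H.Adj (f u) (f v)) {s : Set V}
    (hs : (G.induce s).Connected) : (H.induce (f '' s)).Connected := by
  have : Nonempty (f '' s) := hs.nonempty.map (s.imageFactorization f)
  refine .mk ?_
  rintro ⟨_, u, hu, rfl⟩ ⟨_, v, hv, rfl⟩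
  refine (hs.preconnected ⟨u, hu⟩ ⟨v, hv⟩).map_of_adj (f := s.imageFactorization f)
    fun a b hab => ?_
  rcases hf a b hab with heq | hadj
  · exact .inl (Subtype.ext heq)
  · exact .inr hadj

theorem Connected.induce_image_hom (f : G →g H) {s : Set V} (hs : (G.induce s).Connected) :
    (H.induce (f '' s)).Connected :=
  hs.induce_image fun _ _ h => .inr (f.map_adj h)

theorem not_nonempty_preimage_inl_and_inr_of_preconnected_induce_sum {S : Set (V ⊕ W)}
    (hS : ((G ⊕g H).induce S).Preconnected) :
    ¬((Sum.inl ⁻¹' S).Nonempty ∧ (Sum.inr ⁻¹' S).Nonempty) := by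
  rintro ⟨⟨v, hv⟩, ⟨w, hw⟩⟩
  exact not_reachable_sum_inl_inr v w ((hS ⟨_, hv⟩ ⟨_, hw⟩).map (Embedding.induce S).toHom)

end SimpleGraph

section Glue

variable {V A : Type*} {T : SimpleGraph V} {X : SimpleGraph A} {a0 : A} {x : V}

@[simp] theorem glue_adj_inl_inl {v w : V} :
    (glue T x X a0).Adj (.inl v) (.inl w) ↔ T.Adj v w := by
  simpa [glue, adj_comm] using fun h : T.Adj v w => h.ne

@[simp] theorem glue_adj_inr_inr {a b : {a : A // a ≠ a0}} :
    (glue T x X a0).Adj (.inr a) (.inr b) ↔ X.Adj a b := by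
  simpa [glue, adj_comm, Subtype.ext_iff] using fun h : X.Adj a b => h.ne

@[simp] theorem glue_adj_inl_inr {v : V} {a : {a : A // a ≠ a0}} :
    (glue T x X a0).Adj (.inl v) (.inr a) ↔ v = x ∧ X.Adj a0 a := by
  simp [glue]

@[simp] theorem glue_adj_inr_inl {v : V} {a : {a : A // a ≠ a0}} :
    (glue T x X a0).Adj (.inr a) (.inl v) ↔ v = x ∧ X.Adj a0 a := by
  simp [glue]

theorem glue_adj_sumElim_left {p q : V ⊕ {a : A // a ≠ a0}} (h : (glue T x X a0).Adj p q) :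
    Sum.elim id (fun _ => x) p = Sum.elim id (fun _ => x) q ∨
      T.Adj (Sum.elim id (fun _ => x) p) (Sum.elim id (fun _ => x) q) := by
  rcases p with v | a <;> rcases q with w | b <;> simp_all

theorem glue_adj_sumElim_right {p q : V ⊕ {a : A // a ≠ a0}} (h : (glue T x X a0).Adj p q) :
    Sum.elim (fun _ => a0) Subtype.val p = Sum.elim (fun _ => a0) Subtype.val q ∨
      X.Adj (Sum.elim (fun _ => a0) Subtype.val p) (Sum.elim (fun _ => a0) Subtype.val q) := by
  rcases p with v | a <;> rcases q with w | b <;> simp_all [adj_comm]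

theorem inl_mem_of_preconnected_induce_glue {S : Set (V ⊕ {a : A // a ≠ a0})}
    (hS : ((glue T x X a0).induce S).Preconnected) (hl : (Sum.inl ⁻¹' S).Nonempty)
    (hr : (Sum.inr ⁻¹' S).Nonempty) : Sum.inl x ∈ S := by
  by_contra hx
  obtain ⟨v, hv⟩ := hl
  obtain ⟨a, ha⟩ := hr
  -- without `inl x`, no edge of `S` joins the two summands, so `Sum.isRight` is constant on walks
  have := (hS ⟨_, hv⟩ ⟨_, ha⟩).map_of_adj (H := ⊥) (f := fun p => p.1.isRight) <| by
    rintro ⟨p | a, hp⟩ ⟨q | b, hq⟩ hpq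
    · exact .inl rfl
    · obtain ⟨rfl, -⟩ := (glue_adj_inl_inr (T := T)).1 hpq
      exact absurd hp hx
    · obtain ⟨rfl, -⟩ := (glue_adj_inr_inl (T := T)).1 hpq
      exact absurd hq hx
    · exact .inl rfl
  simp [reachable_bot] at this

theorem induce_glue_eq_induce_sum {S : Set (V ⊕ {a : A // a ≠ a0})}
    (h : ¬((Sum.inl ⁻¹' S).Nonempty ∧ (Sum.inr ⁻¹' S).Nonempty)) :
    (glue T x X a0).induce S = (T ⊕g X.comap Subtype.val).induce S := by
  ext ⟨p | a, hp⟩ ⟨q | b, hq⟩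
  · simp
  · exact absurd ⟨⟨p, hp⟩, ⟨b, hq⟩⟩ h
  · exact absurd ⟨⟨q, hq⟩, ⟨a, hp⟩⟩ h
  · simp

theorem image_sumElim_left {S : Set (V ⊕ {a : A // a ≠ a0})} (hx : Sum.inl x ∈ S) :
    Sum.elim id (fun _ => x) '' S = Sum.inl ⁻¹' S := by
  refine Set.Subset.antisymm ?_ fun v hv => ⟨_, hv, rfl⟩
  rintro _ ⟨v | a, hp, rfl⟩
  exacts [hp, hx]

theorem connected_induce_preimage_inl {S : Set (V ⊕ {a : A // a ≠ a0})}
    (hS : ((glue T x X a0).induce S).Connected) (hx : Sum.inl x ∈ S) :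
    (T.induce (Sum.inl ⁻¹' S)).Connected :=
  image_sumElim_left hx ▸ hS.induce_image fun _ _ => glue_adj_sumElim_left

variable [DecidableEq A]

def glueInr (x : V) (a0 : A) (a : A) : V ⊕ {a : A // a ≠ a0} :=
  if h : a = a0 then .inl x else .inr ⟨a, h⟩

def glueSet (x : V) (a0 : A) (P : Set V) (Q : Set A) : Set (V ⊕ {a : A // a ≠ a0}) :=
  Sum.inl '' P ∪ glueInr x a0 '' Q

@[simp] theorem glueInr_root : glueInr x a0 a0 = .inl x := dif_pos rfl

theorem glueInr_of_ne {a : A} (h : a ≠ a0) : glueInr x a0 a = .inr ⟨a, h⟩ := dif_neg h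

@[simp] theorem glueInr_val (a : {a : A // a ≠ a0}) : glueInr x a0 a.1 = .inr a :=
  glueInr_of_ne a.2

theorem glueInr_eq_inl_iff {a : A} {v : V} : glueInr x a0 a = .inl v ↔ a = a0 ∧ v = x := by
  unfold glueInr
  split_ifs with h <;> simp [h, eq_comm]

theorem leftInverse_sumElim_glueInr :
    Function.LeftInverse (Sum.elim (fun _ => a0) Subtype.val) (glueInr (a0 := a0) x) := by
  intro a
  rcases eq_or_ne a a0 with rfl | ha
  · simp
  · simp [glueInr_of_ne ha]

theorem glueInr_injective : Function.Injective (glueInr (a0 := a0) x) :=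
  leftInverse_sumElim_glueInr.injective

variable (T x) in
def glueInlHom : T →g glue T x X a0 := ⟨Sum.inl, glue_adj_inl_inl.2⟩

variable (T) in
def glueInrHom : X →g glue T x X a0 where
  toFun := glueInr x a0
  map_rel' {a b} h := by
    by_cases ha : a = a0 <;> by_cases hb : b = a0
    · exact absurd (ha.trans hb.symm) h.ne
    · subst ha
      simp [h, glueInr_of_ne hb]
    · subst hb
      simp [h.symm, glueInr_of_ne ha]
    · simp [h, glueInr_of_ne ha, glueInr_of_ne hb]

theorem glueSet_preimage_inl_preimage_glueInr (S : Set (V ⊕ {a : A // a ≠ a0})) :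
    glueSet x a0 (Sum.inl ⁻¹' S) (glueInr x a0 ⁻¹' S) = S := by
  refine Set.union_subset (Set.image_preimage_subset _ _) (Set.image_preimage_subset _ _)
    |>.antisymm fun p hp => ?_
  rcases p with v | a
  · exact .inl ⟨v, hp, rfl⟩
  · exact .inr ⟨a, by simpa using hp, glueInr_val a⟩

theorem preimage_inl_glueSet {P : Set V} {Q : Set A} (hP : x ∈ P) :
    Sum.inl ⁻¹' glueSet x a0 P Q = P := by
  rw [glueSet, Set.preimage_union, Set.preimage_image_eq _ Sum.inl_injective]
  exact Set.union_eq_left.2 fun v ⟨_, _, h⟩ => (glueInr_eq_inl_iff.1 h).2 ▸ hP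

theorem preimage_glueInr_glueSet {P : Set V} {Q : Set A} (hQ : a0 ∈ Q) :
    glueInr x a0 ⁻¹' glueSet x a0 P Q = Q := by
  rw [glueSet, Set.preimage_union, Set.preimage_image_eq _ glueInr_injective]
  exact Set.union_eq_right.2 fun a ⟨_, _, h⟩ => (glueInr_eq_inl_iff.1 h.symm).1 ▸ hQ

theorem preimage_inr_eq_preimage_glueInr {S : Set (V ⊕ {a : A // a ≠ a0})} :
    Sum.inr ⁻¹' S = Subtype.val ⁻¹' (glueInr x a0 ⁻¹' S) := by
  ext a
  simp

theorem image_sumElim_right {S : Set (V ⊕ {a : A // a ≠ a0})} (hx : Sum.inl x ∈ S) :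
    Sum.elim (fun _ => a0) Subtype.val '' S = glueInr x a0 ⁻¹' S := by
  refine Set.Subset.antisymm ?_ fun a ha => ⟨_, ha, leftInverse_sumElim_glueInr a⟩
  rintro _ ⟨v | a, hp, rfl⟩
  · simpa using hx
  · simpa using hp

theorem connected_induce_glueSet {P : Set V} {Q : Set A} (hP : (T.induce P).Connected)
    (hQ : (X.induce Q).Connected) (hxP : x ∈ P) (ha0Q : a0 ∈ Q) :
    ((glue T x X a0).induce (glueSet x a0 P Q)).Connected :=
  induce_union_connected (hP.induce_image_hom (glueInlHom T x)).preconnected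
    (hQ.induce_image_hom (glueInrHom T)).preconnected
    ⟨_, Set.mem_image_of_mem _ hxP, a0, ha0Q, glueInr_root⟩

theorem connected_induce_preimage_glueInr {S : Set (V ⊕ {a : A // a ≠ a0})}
    (hS : ((glue T x X a0).induce S).Connected) (hx : Sum.inl x ∈ S) :
    (X.induce (glueInr x a0 ⁻¹' S)).Connected :=
  image_sumElim_right hx ▸ hS.induce_image fun _ _ => glue_adj_sumElim_right

theorem injOn_glueSet :
    Set.InjOn (fun PQ : Set V × Set A => glueSet x a0 PQ.1 PQ.2)
      ({P | x ∈ P} ×ˢ {Q | a0 ∈ Q}) := by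
  rintro ⟨P, Q⟩ ⟨hP : x ∈ P, hQ : a0 ∈ Q⟩ ⟨P', Q'⟩ ⟨hP' : x ∈ P', hQ' : a0 ∈ Q'⟩
    (h : glueSet x a0 P Q = glueSet x a0 P' Q')
  refine Prod.ext ?_ ?_
  · calc P = Sum.inl ⁻¹' glueSet x a0 P Q := (preimage_inl_glueSet hP).symm
      _ = P' := by rw [h, preimage_inl_glueSet hP']
  · calc Q = glueInr x a0 ⁻¹' glueSet x a0 P Q := (preimage_glueInr_glueSet hQ).symm
      _ = Q' := by rw [h, preimage_glueInr_glueSet hQ']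

theorem setOf_mixed_connected_glue_eq_image (x : V) :
    {S : Set (V ⊕ {a : A // a ≠ a0}) | (Sum.inl ⁻¹' S).Nonempty ∧ (Sum.inr ⁻¹' S).Nonempty ∧
        ((glue T x X a0).induce S).Connected} =
      (fun PQ : Set V × Set A => glueSet x a0 PQ.1 PQ.2) ''
        ({P | x ∈ P ∧ (T.induce P).Connected} ×ˢ
          {Q | a0 ∈ Q ∧ (X.induce Q).Connected ∧ ∃ a ∈ Q, a ≠ a0}) := by
  ext S
  constructor
  · rintro ⟨hl, hr, hS⟩
    have hx := inl_mem_of_preconnected_induce_glue hS.preconnected hl hr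
    obtain ⟨a, ha⟩ : (Subtype.val ⁻¹' (glueInr x a0 ⁻¹' S)).Nonempty := by
      rwa [← preimage_inr_eq_preimage_glueInr]
    refine ⟨(Sum.inl ⁻¹' S, glueInr x a0 ⁻¹' S),
      ⟨⟨hx, connected_induce_preimage_inl hS hx⟩,
        ⟨by simpa using hx, connected_induce_preimage_glueInr hS hx, a, ha, a.2⟩⟩,
      glueSet_preimage_inl_preimage_glueInr S⟩
  · rintro ⟨⟨P, Q⟩, ⟨⟨hxP, hP⟩, ⟨ha0Q, hQ, a, haQ, ha⟩⟩, rfl⟩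
    refine ⟨⟨x, by simpa [preimage_inl_glueSet hxP]⟩, ⟨⟨a, ha⟩, ?_⟩,
      connected_induce_glueSet hP hQ hxP ha0Q⟩
    simpa [preimage_inr_eq_preimage_glueInr (x := x), preimage_glueInr_glueSet (P := P) ha0Q]

end Glue

noncomputable def numNontrivialSubtreesContaining {A : Type*} (X : SimpleGraph A) (a0 : A) : ℕ :=
  {Q : Set A | a0 ∈ Q ∧ (X.induce Q).Connected ∧ ∃ a ∈ Q, a ≠ a0}.ncard

theorem numNontrivialSubtreesContaining_pos {A : Type*} [Finite A] [Nontrivial A]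
    {X : SimpleGraph A} (hX : X.Preconnected) (a0 : A) :
    0 < numNontrivialSubtreesContaining X a0 := by
  obtain ⟨b, hb⟩ := hX.exists_adj_of_nontrivial a0
  exact (Set.ncard_pos (Set.toFinite _)).2
    ⟨{a0, b}, .inl rfl, induce_pair_connected_of_adj hb, b, .inr rfl, hb.ne'⟩

theorem numSubtrees_glue {V A : Type*} [Fintype V] [Fintype A] [DecidableEq A]
    (T : SimpleGraph V) (x : V) (X : SimpleGraph A) (a0 : A) :
    numSubtrees (glue T x X a0) = numSubtrees (T ⊕g X.comap (Subtype.val : {a // a ≠ a0} → A)) +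
      numSubtreesContaining T x * numNontrivialSubtreesContaining X a0 := by
  let mixed : Set (Set (V ⊕ {a : A // a ≠ a0})) :=
    {S | (Sum.inl ⁻¹' S).Nonempty ∧ (Sum.inr ⁻¹' S).Nonempty}
  have hpure : {S | S.Nonempty ∧ ((glue T x X a0).induce S).Connected} \ mixed =
      {S | S.Nonempty ∧ ((T ⊕g X.comap Subtype.val).induce S).Connected} := by
    ext S
    constructor
    · rintro ⟨⟨hne, hS⟩, hS'⟩
      exact ⟨hne, induce_glue_eq_induce_sum hS' ▸ hS⟩
    · rintro ⟨hne, hS⟩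
      have hS' := not_nonempty_preimage_inl_and_inr_of_preconnected_induce_sum hS.preconnected
      exact ⟨⟨hne, (induce_glue_eq_induce_sum hS').symm ▸ hS⟩, hS'⟩
  have hmixed : {S | S.Nonempty ∧ ((glue T x X a0).induce S).Connected} ∩ mixed =
      {S | (Sum.inl ⁻¹' S).Nonempty ∧ (Sum.inr ⁻¹' S).Nonempty ∧
        ((glue T x X a0).induce S).Connected} := by
    ext S
    exact ⟨fun ⟨⟨_, hS⟩, hl, hr⟩ => ⟨hl, hr, hS⟩,
      fun ⟨hl, hr, hS⟩ => ⟨⟨hl.image Sum.inl |>.mono (Set.image_preimage_subset _ _), hS⟩, hl, hr⟩⟩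
  have hinj : Set.InjOn (fun PQ : Set V × Set A => glueSet x a0 PQ.1 PQ.2)
      ({P | x ∈ P ∧ (T.induce P).Connected} ×ˢ
        {Q | a0 ∈ Q ∧ (X.induce Q).Connected ∧ ∃ a ∈ Q, a ≠ a0}) :=
    injOn_glueSet.mono (Set.prod_mono (fun _ => And.left) fun _ => And.left)
  rw [numSubtrees, ← Set.ncard_inter_add_ncard_sdiff_eq_ncard _ mixed, hpure, hmixed,
    setOf_mixed_connected_glue_eq_image, hinj.ncard_image, Set.ncard_prod, add_comm]
  rfl

theorem glue_subtree_count_compare_general {V A : Type*} [Fintype V] [Fintype A] [DecidableEq A]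
    (T : SimpleGraph V) (X : SimpleGraph A) (a0 : A)
    (hX : X.IsTree) (hA : 2 ≤ Fintype.card A)
    (x y : V)
    (hf : numSubtreesContaining T y < numSubtreesContaining T x) :
    numSubtrees (glue T y X a0) < numSubtrees (glue T x X a0) := by
  have : Nontrivial A := Fintype.one_lt_card_iff_nontrivial.1 hA
  have hr := numNontrivialSubtreesContaining_pos hX.connected.preconnected a0
  rw [numSubtrees_glue, numSubtrees_glue]
  exact Nat.add_lt_add_left (Nat.mul_lt_mul_of_pos_right hf hr) _

theorem glue_subtree_count_compare {V A : Type*} [Fintype V] [Fintype A] [DecidableEq A]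
    (T : SimpleGraph V) (X : SimpleGraph A) (a0 : A)
    (hT : T.IsTree) (hX : X.IsTree) (hA : 2 ≤ Fintype.card A)
    (x y : V)
    (hf : numSubtreesContaining T y < numSubtreesContaining T x) :
    numSubtrees (glue T y X a0) < numSubtrees (glue T x X a0) :=
  glue_subtree_count_compare_general T X a0 hX hA x y hf
end

section
/- For integers a ≥ b ≥ 1 with a - b ≥ 2 and n - k ≥ 3 where a + b = k, one has F(P_{n-k}(a,b)) > F(P_{n-k}(a-1, b+1)). -/
open SimpleGraph

/-- `P_m(a,b)`: the tree obtained from the path `v_0 v_1 ... v_{m-1}` by attaching `a`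
pendant vertices to `v_0` and `b` pendant vertices to `v_{m-1}`. -/
def pathAB (m a b : ℕ) : SimpleGraph (Fin m ⊕ (Fin a ⊕ Fin b)) :=
  SimpleGraph.fromRel (fun p q =>
    match p, q with
    | Sum.inl i, Sum.inl j => (i : ℕ) + 1 = (j : ℕ)
    | Sum.inl i, Sum.inr (Sum.inl _) => (i : ℕ) = 0
    | Sum.inl i, Sum.inr (Sum.inr _) => (i : ℕ) = m - 1
    | _, _ => False)

/-!
A subtree of `P_m(a,b)` is either a single pendant leaf, or a segment `v_i … v_j` of the path
together with an arbitrary set of the leaves hanging at whichever of `v_0`, `v_{m-1}` the segment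
contains. Sorting the segments by the ends they contain gives, for `m = p + 2`,
`F(P_m(a,b)) = a + b + 2^(a+b) + (p+1)(2^a + 2^b) + C(p+1, 2)`. Moving a leaf from the `a`-side
to the `b`-side changes only `(p+1)(2^a + 2^b)`, which drops by `(p+1)(2^(a-1) - 2^b) > 0`.
-/

namespace SimpleGraph

variable {V : Type*} {G : SimpleGraph V} {S : Set V}

theorem Preconnected.induce_imp_of_adj (hS : (G.induce S).Preconnected) {φ : V → Prop}
    (hφ : ∀ x ∈ S, ∀ y ∈ S, G.Adj x y → φ x → φ y) {x y : V} (hx : x ∈ S) (hy : y ∈ S)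
    (h : φ x) : φ y := by
  by_contra hy'
  obtain ⟨w⟩ := hS ⟨x, hx⟩ ⟨y, hy⟩
  obtain ⟨d, -, hd, hd'⟩ := w.exists_boundary_dart {z | φ z} h hy'
  exact hd' (hφ _ d.fst.2 _ d.snd.2 d.adj hd)

theorem Preconnected.exists_adj_of_induce (hS : (G.induce S).Preconnected) {x y : V}
    (hx : x ∈ S) (hy : y ∈ S) (hxy : x ≠ y) : ∃ z ∈ S, G.Adj x z := by
  obtain ⟨w⟩ := hS ⟨x, hx⟩ ⟨y, hy⟩
  cases w with
  | nil => exact absurd rfl hxy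
  | cons h _ => exact ⟨_, Subtype.prop _, h⟩

end SimpleGraph

section Path

variable {m a b : ℕ}

@[simp] theorem pathAB_adj_inl_inl {i j : Fin m} :
    (pathAB m a b).Adj (.inl i) (.inl j) ↔ (i : ℕ) + 1 = j ∨ (j : ℕ) + 1 = i := by
  simp only [pathAB, fromRel_adj, ne_eq, Sum.inl.injEq, and_iff_right_iff_imp]
  rintro (h | h) rfl <;> omega

@[simp] theorem pathAB_adj_inl_left {i : Fin m} {x : Fin a} :
    (pathAB m a b).Adj (.inl i) (.inr (.inl x)) ↔ (i : ℕ) = 0 := by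
  simp [pathAB]

@[simp] theorem pathAB_adj_left_inl {i : Fin m} {x : Fin a} :
    (pathAB m a b).Adj (.inr (.inl x)) (.inl i) ↔ (i : ℕ) = 0 := by
  rw [adj_comm, pathAB_adj_inl_left]

@[simp] theorem pathAB_adj_inl_right {i : Fin m} {y : Fin b} :
    (pathAB m a b).Adj (.inl i) (.inr (.inr y)) ↔ (i : ℕ) = m - 1 := by
  simp [pathAB]

@[simp] theorem pathAB_adj_right_inl {i : Fin m} {y : Fin b} :
    (pathAB m a b).Adj (.inr (.inr y)) (.inl i) ↔ (i : ℕ) = m - 1 := by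
  rw [adj_comm, pathAB_adj_inl_right]

@[simp] theorem pathAB_not_adj_inr_inr {x y : Fin a ⊕ Fin b} :
    ¬ (pathAB m a b).Adj (.inr x) (.inr y) := by
  rcases x with x | x <;> rcases y with y | y <;> simp [pathAB]

theorem pathAB_induce_Icc_connected {i j : Fin m} (hij : i ≤ j) :
    ((pathAB m a b).induce (Sum.inl '' Set.Icc i j)).Connected := by
  obtain ⟨d, hd⟩ : ∃ d, (j : ℕ) = i + d := ⟨j - i, by rw [Fin.le_def] at hij; omega⟩
  induction d generalizing j with
  | zero =>
    obtain rfl : j = i := Fin.ext hd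
    rw [Set.Icc_self, Set.image_singleton]
    exact Connected.of_subsingleton
  | succ d ih =>
    let j' : Fin m := ⟨i + d, by omega⟩
    have hj' : (j' : ℕ) = i + d := rfl
    have hIcc : (Sum.inl '' Set.Icc i j : Set (Fin m ⊕ (Fin a ⊕ Fin b))) =
        Sum.inl '' Set.Icc i j' ∪ {Sum.inl j} := by
      ext (t | x)
      · simp only [Set.mem_union, Set.mem_singleton_iff, Sum.inl_injective.mem_set_image,
          Set.mem_Icc, Fin.le_def, Sum.inl.injEq, Fin.ext_iff, hj']
        omega
      · simp
    rw [hIcc]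
    exact connected_induce_union (ih (Fin.le_def.2 (by omega)) hj').preconnected
      .of_subsingleton ⟨j', ⟨Fin.le_def.2 (by omega), le_rfl⟩, rfl⟩ (Set.mem_singleton _)
      (pathAB_adj_inl_inl.2 (.inl (by omega)))

end Path

/-- A subtree of `pathAB m a b` that meets the path: the segment `v_lo … v_hi` together with
some of the pendant leaves; leaves at `v_0` (resp. `v_{m-1}`) occur only if the segment reaches
that end. -/
@[ext]
structure PathABSegment (m a b : ℕ) where
  lo : Fin m
  hi : Fin m
  left : Set (Fin a)
  right : Set (Fin b)
  lo_le_hi : lo ≤ hi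
  lo_eq_zero : left.Nonempty → (lo : ℕ) = 0
  hi_eq_last : right.Nonempty → (hi : ℕ) = m - 1

namespace PathABSegment

variable {m a b : ℕ}

def toSet (c : PathABSegment m a b) : Set (Fin m ⊕ (Fin a ⊕ Fin b)) :=
  Sum.inl '' Set.Icc c.lo c.hi ∪ Sum.inr '' (Sum.inl '' c.left ∪ Sum.inr '' c.right)

variable {c : PathABSegment m a b}

@[simp] theorem inl_mem_toSet {t : Fin m} : Sum.inl t ∈ c.toSet ↔ c.lo ≤ t ∧ t ≤ c.hi := by
  simp [toSet]

@[simp] theorem inr_inl_mem_toSet {x : Fin a} : Sum.inr (Sum.inl x) ∈ c.toSet ↔ x ∈ c.left := by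
  simp [toSet]

@[simp] theorem inr_inr_mem_toSet {y : Fin b} : Sum.inr (Sum.inr y) ∈ c.toSet ↔ y ∈ c.right := by
  simp [toSet]

theorem toSet_injective : Function.Injective (toSet : PathABSegment m a b → _) := by
  intro c d h
  have hmem (v) : v ∈ c.toSet ↔ v ∈ d.toSet := by rw [h]
  have hlo := hmem (.inl c.lo)
  have hhi := hmem (.inl c.hi)
  have hlo' := hmem (.inl d.lo)
  have hhi' := hmem (.inl d.hi)
  simp only [inl_mem_toSet, le_refl, c.lo_le_hi, d.lo_le_hi, and_true, true_iff,
    iff_true] at hlo hhi hlo' hhi'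
  ext x
  · exact le_antisymm hlo'.1 hlo.1
  · exact le_antisymm hhi.2 hhi'.2
  · simpa using hmem (.inr (.inl x))
  · simpa using hmem (.inr (.inr x))

instance : Finite (PathABSegment m a b) :=
  .of_injective (fun c => (c.lo, c.hi, c.left, c.right)) fun c d h => by
    simp only [Prod.mk.injEq] at h
    exact PathABSegment.ext h.1 h.2.1 h.2.2.1 h.2.2.2

theorem induce_toSet_connected (c : PathABSegment m a b) :
    ((pathAB m a b).induce c.toSet).Connected := by
  have hpath := pathAB_induce_Icc_connected (a := a) (b := b) c.lo_le_hi
  have hsub : Sum.inl '' Set.Icc c.lo c.hi ⊆ c.toSet := Set.subset_union_left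
  have hlo : (.inl c.lo : Fin m ⊕ (Fin a ⊕ Fin b)) ∈ Sum.inl '' Set.Icc c.lo c.hi :=
    ⟨c.lo, ⟨le_rfl, c.lo_le_hi⟩, rfl⟩
  refine induce_connected_of_patches _ (hsub hlo) fun {v} hv => ?_
  rcases v with t | x | y
  · exact ⟨_, hsub, hlo, ⟨t, inl_mem_toSet.1 hv, rfl⟩, hpath.preconnected _ _⟩
  · have hx := inr_inl_mem_toSet.1 hv
    have hadj : (pathAB m a b).Adj (.inl c.lo) (.inr (.inl x)) :=
      pathAB_adj_inl_left.2 (c.lo_eq_zero ⟨x, hx⟩)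
    refine ⟨{.inl c.lo, .inr (.inl x)}, ?_, by simp, by simp,
      (induce_pair_connected_of_adj hadj).preconnected _ _⟩
    simp [Set.insert_subset_iff, c.lo_le_hi, hx]
  · have hy := inr_inr_mem_toSet.1 hv
    have hadj : (pathAB m a b).Adj (.inl c.hi) (.inr (.inr y)) :=
      pathAB_adj_inl_right.2 (c.hi_eq_last ⟨y, hy⟩)
    refine ⟨_ ∪ {.inr (.inr y)}, Set.union_subset hsub (by simpa using hy), .inl hlo,
      .inr (Set.mem_singleton _), (connected_induce_union hpath.preconnected .of_subsingleton
        ⟨c.hi, ⟨c.lo_le_hi, le_rfl⟩, rfl⟩ (Set.mem_singleton _) hadj).preconnected _ _⟩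

end PathABSegment

section Structure

variable {m a b : ℕ} {S : Set (Fin m ⊕ (Fin a ⊕ Fin b))}

theorem pathAB_ordConnected (hS : ((pathAB m a b).induce S).Preconnected) :
    {t : Fin m | Sum.inl t ∈ S}.OrdConnected := by
  refine ⟨fun s hs t ht u hu => by_contra fun hu' => ?_⟩
  have hne (v : Fin m) (hv : Sum.inl v ∈ S) : (v : ℕ) ≠ u := fun h => hu' (Fin.ext h ▸ hv)
  have hsu : (s : ℕ) < u := lt_of_le_of_ne hu.1 (hne s hs)
  -- every edge inside `S` stays on the side of the missing vertex `v_u` that contains `v_0`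
  have := hS.induce_imp_of_adj
    (φ := Sum.elim (fun v : Fin m => (v : ℕ) < u) (Sum.elim (fun _ => True) (fun _ => False)))
    ?_ hs ht hsu
  · exact absurd hu.2 (not_le.2 (by simpa using this))
  · rintro (x | x | x) hx (y | y | y) hy hxy h <;> simp at hxy h ⊢
    · have := hne y hy; omega
    · have := u.isLt; omega
    · omega

theorem pathAB_eq_singleton_of_forall_inl_notMem (hS : ((pathAB m a b).induce S).Preconnected)
    {x : Fin a ⊕ Fin b} (hx : Sum.inr x ∈ S) (hpath : ∀ t, Sum.inl t ∉ S) : S = {Sum.inr x} := by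
  refine Set.eq_singleton_iff_unique_mem.2 ⟨hx, fun v hv => by_contra fun hvx => ?_⟩
  obtain ⟨z | z, hz, hxz⟩ := hS.exists_adj_of_induce hx hv (Ne.symm hvx)
  · exact hpath z hz
  · exact pathAB_not_adj_inr_inr hxz

theorem pathAB_exists_segment (hS : ((pathAB m a b).induce S).Preconnected) {t : Fin m}
    (ht : Sum.inl t ∈ S) : ∃ c : PathABSegment m a b, c.toSet = S := by
  classical
  set P := Finset.univ.filter fun t : Fin m => Sum.inl t ∈ S
  have hP : P.Nonempty := ⟨t, by simp [P, ht]⟩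
  have hmem (v : Fin m) : Sum.inl v ∈ S ↔ P.min' hP ≤ v ∧ v ≤ P.max' hP := by
    refine ⟨fun hv => ⟨P.min'_le v (by simp [P, hv]), P.le_max' v (by simp [P, hv])⟩,
      fun hv => (pathAB_ordConnected hS).out ?_ ?_ hv⟩
    · simpa [P] using P.min'_mem hP
    · simpa [P] using P.max'_mem hP
  refine ⟨⟨P.min' hP, P.max' hP, {x | .inr (.inl x) ∈ S}, {y | .inr (.inr y) ∈ S},
    P.min'_le_max' hP, ?_, ?_⟩, ?_⟩
  · rintro ⟨x, hx⟩
    obtain ⟨z | z, hz, hxz⟩ := hS.exists_adj_of_induce hx ht (by simp)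
    · have := ((hmem z).1 hz).1
      simp only [pathAB_adj_left_inl] at hxz
      rw [Fin.le_def] at this
      omega
    · exact absurd hxz pathAB_not_adj_inr_inr
  · rintro ⟨y, hy⟩
    obtain ⟨z | z, hz, hyz⟩ := hS.exists_adj_of_induce hy ht (by simp)
    · have := ((hmem z).1 hz).2
      simp only [pathAB_adj_right_inl] at hyz
      rw [Fin.le_def] at this
      have := (P.max' hP).isLt
      omega
    · exact absurd hyz pathAB_not_adj_inr_inr
  · ext (v | x | y)
    · exact PathABSegment.inl_mem_toSet.trans (hmem v).symm
    · simp
    · simp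

theorem pathAB_connected_cases (hS : ((pathAB m a b).induce S).Connected) :
    (∃ x, S = {Sum.inr x}) ∨ ∃ c : PathABSegment m a b, c.toSet = S := by
  by_cases hpath : ∃ t, Sum.inl t ∈ S
  · obtain ⟨t, ht⟩ := hpath
    exact .inr (pathAB_exists_segment hS.preconnected ht)
  · rw [not_exists] at hpath
    obtain ⟨v | x, hv⟩ := hS.nonempty
    · exact absurd hv (hpath v)
    · exact .inl ⟨x, pathAB_eq_singleton_of_forall_inl_notMem hS.preconnected hv hpath⟩

end Structure

theorem Nat.card_subtype_fst_le_snd (α : Type*) [LinearOrder α] :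
    Nat.card {q : α × α // q.1 ≤ q.2} = (Nat.card α + 1).choose 2 := by
  rw [← Nat.card_congr Sym2.sortEquiv, Sym2.natCard]

namespace PathABSegment

variable {p a b : ℕ}

-- Segments through both ends, through `v_0` only, through `v_{p+1}` only, and interior ones.
def ofSum : (Set (Fin a) × Set (Fin b)) ⊕ (Fin (p + 1) × Set (Fin a)) ⊕
    (Fin (p + 1) × Set (Fin b)) ⊕ {q : Fin p × Fin p // q.1 ≤ q.2} → PathABSegment (p + 2) a b
  | .inl (A, B) => ⟨0, Fin.last _, A, B, Fin.zero_le _, fun _ => rfl, fun _ => by simp⟩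
  | .inr (.inl (j, A)) => ⟨0, j.castSucc, A, ∅, Fin.zero_le _, fun _ => rfl, by simp⟩
  | .inr (.inr (.inl (i, B))) => ⟨i.succ, Fin.last _, ∅, B, Fin.le_last _, by simp, by simp⟩
  | .inr (.inr (.inr ⟨(i, j), hij⟩)) =>
    ⟨i.succ.castSucc, j.succ.castSucc, ∅, ∅, by simpa using hij, by simp, by simp⟩

theorem ofSum_injective : Function.Injective (ofSum : _ → PathABSegment (p + 2) a b) := by
  rintro (⟨A, B⟩ | ⟨j, A⟩ | ⟨i, B⟩ | ⟨⟨i, j⟩, h⟩) (⟨A', B'⟩ | ⟨j', A'⟩ | ⟨i', B'⟩ | ⟨⟨i', j'⟩, h'⟩)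
    heq
  all_goals
    have hlo := congrArg (fun c : PathABSegment _ _ _ => (c.lo : ℕ)) heq
    have hhi := congrArg (fun c : PathABSegment _ _ _ => (c.hi : ℕ)) heq
    have hA := congrArg left heq
    have hB := congrArg right heq
    clear heq
    simp [ofSum] at hlo hhi hA hB ⊢
  all_goals first
    | exact ⟨hA, hB⟩ | exact ⟨Fin.ext hhi, hA⟩ | exact ⟨Fin.ext hlo, hB⟩
    | exact ⟨Fin.ext hlo, Fin.ext hhi⟩ | omega

theorem ofSum_surjective : Function.Surjective (ofSum : _ → PathABSegment (p + 2) a b) := by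
  intro c
  have hlo_le := Fin.le_def.1 c.lo_le_hi
  have hhi_lt := c.hi.isLt
  by_cases hlo : (c.lo : ℕ) = 0 <;> by_cases hhi : (c.hi : ℕ) = p + 1
  · exact ⟨.inl (c.left, c.right), by ext <;> simp [ofSum, hlo, hhi]⟩
  · have hB : c.right = ∅ := Set.not_nonempty_iff_eq_empty.1 fun h => hhi (c.hi_eq_last h)
    exact ⟨.inr (.inl (⟨c.hi, by omega⟩, c.left)), by ext <;> simp [ofSum, hlo, hB]⟩
  · have hA : c.left = ∅ := Set.not_nonempty_iff_eq_empty.1 fun h => hlo (c.lo_eq_zero h)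
    exact ⟨.inr (.inr (.inl (⟨c.lo - 1, by omega⟩, c.right))), by
      ext <;> simp [ofSum, hA, hhi]; omega⟩
  · have hA : c.left = ∅ := Set.not_nonempty_iff_eq_empty.1 fun h => hlo (c.lo_eq_zero h)
    have hB : c.right = ∅ := Set.not_nonempty_iff_eq_empty.1 fun h => hhi (c.hi_eq_last h)
    exact ⟨.inr (.inr (.inr ⟨(⟨c.lo - 1, by omega⟩, ⟨c.hi - 1, by omega⟩),
      Fin.le_def.2 (by simp only; omega)⟩)), by ext <;> simp [ofSum, hA, hB] <;> omega⟩

theorem natCard_eq : Nat.card (PathABSegment (p + 2) a b) =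
    2 ^ a * 2 ^ b + (p + 1) * 2 ^ a + (p + 1) * 2 ^ b + (p + 1).choose 2 := by
  rw [← Nat.card_eq_of_bijective _ ⟨ofSum_injective, ofSum_surjective⟩, Nat.card_sum,
    Nat.card_sum, Nat.card_sum, Nat.card_subtype_fst_le_snd, Nat.card_prod, Nat.card_prod,
    Nat.card_prod]
  simp only [Nat.card_eq_fintype_card, Fintype.card_set, Fintype.card_fin]
  ring

end PathABSegment

theorem numSubtrees_pathAB_eq_add_natCard {m a b : ℕ} :
    numSubtrees (pathAB m a b) = a + b + Nat.card (PathABSegment m a b) := by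
  let f : (Fin a ⊕ Fin b) ⊕ PathABSegment m a b → Set (Fin m ⊕ (Fin a ⊕ Fin b)) :=
    Sum.elim (fun x => {.inr x}) PathABSegment.toSet
  have hne (x : Fin a ⊕ Fin b) (c : PathABSegment m a b) : c.toSet ≠ {.inr x} := fun h => by
    have := PathABSegment.inl_mem_toSet.2 ⟨le_rfl, c.lo_le_hi⟩
    simp [h] at this
  have hf : Function.Injective f := by
    rintro (x | c) (y | d) h
    · exact congrArg _ (Sum.inr_injective (Set.singleton_injective h))
    · exact absurd h.symm (hne x d)
    · exact absurd h (hne y c)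
    · exact congrArg _ (PathABSegment.toSet_injective h)
  have hrange : Set.range f = {S | S.Nonempty ∧ ((pathAB m a b).induce S).Connected} := by
    ext S
    refine ⟨?_, fun ⟨_, hS⟩ => ?_⟩
    · rintro ⟨x | c, rfl⟩
      · exact ⟨Set.singleton_nonempty _,
          show ((pathAB m a b).induce {.inr x}).Connected from .of_subsingleton⟩
      · exact ⟨⟨_, PathABSegment.inl_mem_toSet.2 ⟨le_rfl, c.lo_le_hi⟩⟩,
          c.induce_toSet_connected⟩
    · obtain ⟨x, rfl⟩ | ⟨c, rfl⟩ := pathAB_connected_cases hS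
      exacts [⟨.inl x, rfl⟩, ⟨.inr c, rfl⟩]
  rw [numSubtrees, ← hrange, Set.ncard_range_of_injective hf, Nat.card_sum, Nat.card_sum]
  simp

theorem numSubtrees_pathAB (p a b : ℕ) :
    numSubtrees (pathAB (p + 2) a b) =
      a + b + 2 ^ (a + b) + (p + 1) * (2 ^ a + 2 ^ b) + (p + 1).choose 2 := by
  rw [numSubtrees_pathAB_eq_add_natCard, PathABSegment.natCard_eq]
  ring

theorem numSubtrees_pathAB_gt_general (n k a b : ℕ) (hgap : b + 2 ≤ a) (hm : 3 ≤ n - k) :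
    numSubtrees (pathAB (n - k) (a - 1) (b + 1)) < numSubtrees (pathAB (n - k) a b) := by
  obtain ⟨p, hp⟩ : ∃ p, n - k = p + 2 := ⟨n - k - 2, by omega⟩
  obtain ⟨c, rfl⟩ : ∃ c, a = c + 1 := ⟨a - 1, by omega⟩
  have hpow : 2 ^ b < 2 ^ c := Nat.pow_lt_pow_right one_lt_two (by omega)
  have key : (p + 1) * (2 ^ c + 2 ^ (b + 1)) < (p + 1) * (2 ^ (c + 1) + 2 ^ b) :=
    Nat.mul_lt_mul_of_pos_left (by rw [pow_succ, pow_succ]; omega) p.succ_pos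
  rw [hp, numSubtrees_pathAB, numSubtrees_pathAB, Nat.add_sub_cancel,
    show c + (b + 1) = c + 1 + b by ring]
  omega

theorem numSubtrees_pathAB_gt (n k a b : ℕ) (hb : 1 ≤ b) (hgap : b + 2 ≤ a)
    (hab : a + b = k) (hm : 3 ≤ n - k) :
    numSubtrees (pathAB (n - k) (a - 1) (b + 1)) < numSubtrees (pathAB (n - k) a b) :=
  numSubtrees_pathAB_gt_general n k a b hgap hm
end
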